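/- arXiv:2104.06290 — 2 statements merged into one kernel-verified Lean document; each statement's English description precedes it below -/
import Mathlib

section
/- For every integer n ≥ 1 and nonzero constants a₂,…,a_k ∈ ℂ with |a₂^n + ⋯ + a_k^n| ≤ 1, the function φ(z) = log(1 − a₂^n z^n − ⋯ − a_k^n z^n) is holomorphic on the unit disk 𝔻, and setting f₁ = exp(φ/n) and fⱼ(z) = aⱼ z for j = 2,…,k gives holomorphic functions on 𝔻 satisfying f₁^n + f₂^n + ⋯ + f_k^n = 1. -/
open Metric

/-! Take `φ z = log (1 - S zⁿ)` with `S = ∑ aⱼⁿ` and the principal logarithm: on the disk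
`‖S zⁿ‖ < 1`, so `1 - S zⁿ` stays in the right half-plane, where `log` is holomorphic.
Then `exp (φ/n)ⁿ = exp φ = 1 - ∑ (aⱼ z)ⁿ`. -/

lemma norm_mul_pow_lt_one {𝕜 : Type*} [NormedDivisionRing 𝕜] {c z : 𝕜} {n : ℕ}
    (hc : ‖c‖ ≤ 1) (hz : ‖z‖ < 1) (hn : n ≠ 0) : ‖c * z ^ n‖ < 1 := by
  rw [norm_mul, norm_pow]
  calc ‖c‖ * ‖z‖ ^ n ≤ ‖z‖ ^ n := mul_le_of_le_one_left (by positivity) hc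
    _ < 1 := pow_lt_one₀ (norm_nonneg z) hz hn

namespace Complex

lemma one_sub_mem_slitPlane {w : ℂ} (hw : ‖w‖ < 1) : 1 - w ∈ slitPlane := by
  simpa [sub_eq_add_neg] using mem_slitPlane_of_norm_lt_one (z := -w) (by rwa [norm_neg])

lemma exp_div_natCast_pow (w : ℂ) {n : ℕ} (hn : n ≠ 0) : exp (w / n) ^ n = exp w := by
  rw [← exp_nat_mul, mul_div_cancel₀ _ (Nat.cast_ne_zero.mpr hn)]

variable {c : ℂ} {n : ℕ}

lemma one_sub_mul_pow_mem_slitPlane (hc : ‖c‖ ≤ 1) (hn : n ≠ 0) {z : ℂ} (hz : z ∈ ball 0 1) :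
    1 - c * z ^ n ∈ slitPlane :=
  one_sub_mem_slitPlane (norm_mul_pow_lt_one hc (mem_ball_zero_iff.mp hz) hn)

lemma differentiableOn_log_one_sub_mul_pow (hc : ‖c‖ ≤ 1) (hn : n ≠ 0) :
    DifferentiableOn ℂ (fun z => log (1 - c * z ^ n)) (ball 0 1) :=
  DifferentiableOn.clog (by fun_prop) fun _ => one_sub_mul_pow_mem_slitPlane hc hn

end Complex

open Complex in
theorem fermat_k_term_holomorphic_solution_disk_general (n : ℕ) (hn : 1 ≤ n)
    (m : ℕ) (a : Fin m → ℂ)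
    (hsum : ‖∑ j : Fin m, a j ^ n‖ ≤ 1) :
    ∃ φ : ℂ → ℂ, DifferentiableOn ℂ φ (ball (0 : ℂ) 1) ∧
      (∀ z ∈ ball (0 : ℂ) 1, Complex.exp (φ z) = 1 - (∑ j : Fin m, a j ^ n) * z ^ n) ∧
      DifferentiableOn ℂ (fun z => Complex.exp (φ z / n)) (ball (0 : ℂ) 1) ∧
      (∀ z ∈ ball (0 : ℂ) 1,
        Complex.exp (φ z / n) ^ n + ∑ j : Fin m, (a j * z) ^ n = 1) := by
  have hn₀ : n ≠ 0 := by omega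
  have hφ := differentiableOn_log_one_sub_mul_pow hsum hn₀
  have hexp : ∀ z ∈ ball (0 : ℂ) 1, exp (log (1 - (∑ j, a j ^ n) * z ^ n)) =
      1 - (∑ j, a j ^ n) * z ^ n := fun z hz =>
    exp_log (slitPlane_ne_zero (one_sub_mul_pow_mem_slitPlane hsum hn₀ hz))
  refine ⟨_, hφ, hexp, (hφ.div_const _).cexp, fun z hz => ?_⟩
  rw [exp_div_natCast_pow _ hn₀, hexp z hz, Finset.sum_mul]
  simp only [mul_pow]
  ring

/-- For `n ≥ 1` and nonzero constants `a₁, …, a_m` (the `a₂, …, a_k` of the equation,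
`m = k − 1 ≥ 1`) with `|a₁^n + ⋯ + a_m^n| ≤ 1`, there is a holomorphic branch `φ` of
`log (1 − (a₁^n + ⋯ + a_m^n) z^n)` on the unit disk, and `f₁ = exp (φ/n)`,
`f_{j+1}(z) = a_j z` are holomorphic on `𝔻` and satisfy `f₁^n + f₂^n + ⋯ + f_k^n = 1`. -/
theorem fermat_k_term_holomorphic_solution_disk (n : ℕ) (hn : 1 ≤ n)
    (m : ℕ) (hm : 1 ≤ m) (a : Fin m → ℂ) (ha : ∀ j, a j ≠ 0)
    (hsum : ‖∑ j : Fin m, a j ^ n‖ ≤ 1) :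
    ∃ φ : ℂ → ℂ, DifferentiableOn ℂ φ (ball (0 : ℂ) 1) ∧
      (∀ z ∈ ball (0 : ℂ) 1, Complex.exp (φ z) = 1 - (∑ j : Fin m, a j ^ n) * z ^ n) ∧
      DifferentiableOn ℂ (fun z => Complex.exp (φ z / n)) (ball (0 : ℂ) 1) ∧
      (∀ z ∈ ball (0 : ℂ) 1,
        Complex.exp (φ z / n) ^ n + ∑ j : Fin m, (a j * z) ^ n = 1) :=
  fermat_k_term_holomorphic_solution_disk_general n hn m a hsum
end

section
/- For any entire function α on ℂ, the functions f₁ = 2^{-3/4}(e^{3α} + e^{-α}), f₂ = (−2)^{-3/4}(e^{3α} − e^{-α}), f₃ = (−1)^{1/4} e^{2α} satisfy f₁⁴ + f₂⁴ + f₃⁴ = 1, where (−2)^{-3/4} and (−1)^{1/4} denote fixed fourth-roots with ((−2)^{-3/4})⁴ = −1/8 and ((−1)^{1/4})⁴ = −1. -/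
/-!
With `u = e^{3α}` and `v = e^{-α}` one has `u v³ = 1` and `u v = e^{2α}`. Since
`(u + v)⁴ - (u - v)⁴ = 8 (u³ v + u v³)`, the first two terms sum to `u³ v + 1`, and the third
is `-(u v)⁴ = -u³ v · (u v³) = -u³ v`.
-/

theorem fermat_quartic_of_mul_pow_three_eq_one {R : Type*} [CommRing R] {r c d u v : R}
    (hr : 8 * r ^ 4 = 1) (hc : 8 * c ^ 4 = -1) (hd : d ^ 4 = -1) (huv : u * v ^ 3 = 1) :
    (r * (u + v)) ^ 4 + (c * (u - v)) ^ 4 + (d * (u * v)) ^ 4 = 1 := by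
  linear_combination (u ^ 3 * v + u * v ^ 3 - c ^ 4 * (u - v) ^ 4) * hr + r ^ 4 * (u - v) ^ 4 * hc
    + (u * v) ^ 4 * hd + (1 - u ^ 3 * v) * huv

theorem fermat_quartic_three_term_parametric_general (α : ℂ → ℂ)
    (c d : ℂ) (hc : c ^ 4 = -(1 / 8)) (hd : d ^ 4 = -1) (z : ℂ) :
    ((((2 : ℝ) ^ (-(3 / 4) : ℝ) : ℝ) : ℂ) * (Complex.exp (3 * α z) + Complex.exp (-α z))) ^ 4
      + (c * (Complex.exp (3 * α z) - Complex.exp (-α z))) ^ 4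
      + (d * Complex.exp (2 * α z)) ^ 4 = 1 := by
  have hr : 8 * ((((2 : ℝ) ^ (-(3 / 4) : ℝ) : ℝ) : ℂ)) ^ 4 = 1 := by
    rw [← Complex.ofReal_pow, ← Real.rpow_mul_natCast zero_le_two]
    norm_num
  have huv : Complex.exp (3 * α z) * Complex.exp (-α z) ^ 3 = 1 := by
    rw [← Complex.exp_nat_mul, ← Complex.exp_add]
    push_cast
    ring_nf
    exact Complex.exp_zero
  have h2 : Complex.exp (2 * α z) = Complex.exp (3 * α z) * Complex.exp (-α z) := by
    rw [← Complex.exp_add]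
    ring_nf
  rw [h2]
  exact fermat_quartic_of_mul_pow_three_eq_one hr (by rw [hc]; norm_num) hd huv

/-- For any entire function `α` on `ℂ`, the functions `f₁ = 2^{-3/4}(e^{3α} + e^{-α})`,
`f₂ = (−2)^{-3/4}(e^{3α} − e^{-α})`, `f₃ = (−1)^{1/4} e^{2α}` satisfy
`f₁⁴ + f₂⁴ + f₃⁴ = 1`, where `(−2)^{-3/4}` and `(−1)^{1/4}` denote fixed fourth-roots
with `((−2)^{-3/4})⁴ = −1/8` and `((−1)^{1/4})⁴ = −1`. -/
theorem fermat_quartic_three_term_parametric (α : ℂ → ℂ) (hα : Differentiable ℂ α)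
    (c d : ℂ) (hc : c ^ 4 = -(1 / 8)) (hd : d ^ 4 = -1) (z : ℂ) :
    ((((2 : ℝ) ^ (-(3 / 4) : ℝ) : ℝ) : ℂ) * (Complex.exp (3 * α z) + Complex.exp (-α z))) ^ 4
      + (c * (Complex.exp (3 * α z) - Complex.exp (-α z))) ^ 4
      + (d * Complex.exp (2 * α z)) ^ 4 = 1 :=
  fermat_quartic_three_term_parametric_general α c d hc hd z
end
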